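/- arXiv:2004.12774 — 2 statements merged into one kernel-verified Lean document; each statement's English description precedes it below -/
import Mathlib

section
/- Let λ be a real number. If some derivation of the Lie algebra rh₃ = h₃ × ℝ has characteristic polynomial X²(X − 1)(X − λ), then λ ∈ {−1, 0, 1}. -/
set_option linter.unusedTactic false
set_option linter.unnecessarySeqFocus false
set_option linter.unreachableTactic false

open Polynomial

/-- The 3-dimensional Heisenberg Lie algebra `h₃`: the real vector space `Fin 3 → ℝ`
with basis `e₁, e₂, e₃` and only nonzero bracket `⁅e₁, e₂⁆ = e₃`. -/
def H3 : Type := Fin 3 → ℝ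

noncomputable instance : AddCommGroup H3 := Pi.addCommGroup
noncomputable instance : Module ℝ H3 := Pi.module _ _ _
instance : FiniteDimensional ℝ H3 := inferInstanceAs (FiniteDimensional ℝ (Fin 3 → ℝ))

lemma H3.add_apply (x y : H3) (i : Fin 3) : (x + y) i = x i + y i := rfl
lemma H3.smul_apply (r : ℝ) (x : H3) (i : Fin 3) : (r • x) i = r * x i := rfl

noncomputable instance : LieRing H3 :=
  { (inferInstance : AddCommGroup H3) with
    bracket := fun x y => ![0, 0, x 0 * y 1 - x 1 * y 0]
    add_lie := by
      intro x y z
      show (![_,_,_] : Fin 3 → ℝ) = ![_,_,_] + ![_,_,_]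
      funext i
      fin_cases i <;> simp [H3.add_apply] <;> erw [H3.add_apply] <;> simp <;> ring
    lie_add := by
      intro x y z
      show (![_,_,_] : Fin 3 → ℝ) = ![_,_,_] + ![_,_,_]
      funext i
      fin_cases i <;> simp [H3.add_apply] <;> erw [H3.add_apply] <;> simp <;> ring
    lie_self := by
      intro x
      show (![_,_,_] : Fin 3 → ℝ) = 0
      funext i
      fin_cases i <;> simp <;> ring
    leibniz_lie := by
      intro x y z
      show (![_,_,_] : Fin 3 → ℝ) = ![_,_,_] + ![_,_,_]
      funext i
      fin_cases i <;> simp [H3.add_apply] <;> erw [H3.add_apply] <;> simp <;> ring }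

noncomputable instance : LieAlgebra ℝ H3 :=
  { lie_smul := by
      intro r x y
      show (![_,_,_] : Fin 3 → ℝ) = r • ![_,_,_]
      funext i
      fin_cases i <;> simp [H3.smul_apply] <;> erw [H3.smul_apply] <;> simp <;> ring }

/-- `rh₃ := h₃ × ℝ`, the product Lie algebra of the Heisenberg Lie algebra `h₃` with the
1-dimensional abelian Lie algebra `ℝ`. -/
def RH3 : Type := H3 × ℝ

noncomputable instance : AddCommGroup RH3 := inferInstanceAs (AddCommGroup (H3 × ℝ))
noncomputable instance : Module ℝ RH3 := inferInstanceAs (Module ℝ (H3 × ℝ))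
instance : FiniteDimensional ℝ RH3 := inferInstanceAs (FiniteDimensional ℝ (H3 × ℝ))

noncomputable instance : LieRing RH3 :=
  { (inferInstance : AddCommGroup RH3) with
    bracket := fun x y => (⁅x.1, y.1⁆, 0)
    add_lie := by
      intro x y z
      show (⁅x.1 + y.1, z.1⁆, (0:ℝ)) = (⁅x.1, z.1⁆ + ⁅y.1, z.1⁆, 0 + 0)
      simp [add_lie]
    lie_add := by
      intro x y z
      show (⁅x.1, y.1 + z.1⁆, (0:ℝ)) = (⁅x.1, y.1⁆ + ⁅x.1, z.1⁆, 0 + 0)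
      simp [lie_add]
    lie_self := by
      intro x
      show (⁅x.1, x.1⁆, (0:ℝ)) = (0, 0)
      simp
    leibniz_lie := by
      intro x y z
      show (⁅x.1, ⁅y.1, z.1⁆⁆, (0:ℝ)) = (⁅⁅x.1, y.1⁆, z.1⁆ + ⁅y.1, ⁅x.1, z.1⁆⁆, 0 + 0)
      rw [← leibniz_lie]
      simp }

noncomputable instance : LieAlgebra ℝ RH3 :=
  { lie_smul := by
      intro r x y
      show (⁅x.1, r • y.1⁆, (0:ℝ)) = (r • ⁅x.1, y.1⁆, r • (0:ℝ))
      simp }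


/-!
A derivation `D` of `rh₃` preserves the centre `span(e₃, e₄)`, and
`D e₃ = D⁅e₁, e₂⁆ = ⁅e₁, D e₂⁆ + ⁅D e₁, e₂⁆ = (tr A) e₃`, where `A` is the block of `D` on
`span(e₁, e₂)` modulo the centre. So the matrix of `D` is block lower triangular with diagonal
blocks `A` and `!![tr A, r; 0, s]`, and `charpoly D = (X² - tr A • X + det A)(X - tr A)(X - s)`.
Comparing coefficients with `X²(X - 1)(X - λ)` leaves a small polynomial system in
`tr A, det A, s, λ` whose solutions all have `λ ∈ {-1, 0, 1}`.
-/

open Matrix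

namespace LieDerivation

variable {R L : Type*} [CommRing R] [LieRing L] [LieAlgebra R L]

lemma apply_mem_center (D : LieDerivation R L L) {z : L} (hz : z ∈ LieAlgebra.center R L) :
    D z ∈ LieAlgebra.center R L := by
  rw [LieModule.mem_maxTrivSubmodule] at hz ⊢
  intro x
  have := D.apply_lie_eq_add x z
  rw [hz x, hz (D x), map_zero, add_zero] at this
  exact this.symm

end LieDerivation

lemma Matrix.charpoly_upperTriangular_fin_two {R : Type*} [CommRing R] [Nontrivial R] (a r s : R) :
    (!![a, r; 0, s]).charpoly = (X - C a) * (X - C s) := by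
  rw [charpoly_fin_two, trace_fin_two_of, det_fin_two_of]
  simp only [map_add, map_mul, map_sub, map_zero]
  ring

lemma coeff_relations_of_mul_eq {t δ s lam : ℝ}
    (h : (X ^ 2 - C t * X + C δ) * ((X - C t) * (X - C s)) = X ^ 2 * (X - 1) * (X - C lam)) :
    2 * t + s = 1 + lam ∧ δ + t ^ 2 + 2 * t * s = lam ∧ δ * (t + s) + t ^ 2 * s = 0 ∧
      δ * t * s = 0 := by
  -- Both sides are monic quartics, so values at four points pin down the other coefficients.
  have e (x : ℝ) := congrArg (eval x) h
  simp only [eval_mul, eval_add, eval_sub, eval_pow, eval_X, eval_C, eval_one] at e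
  have e₀ := e 0
  have e₁ := e 1
  have e₂ := e (-1)
  have e₃ := e 2
  refine ⟨?_, ?_, ?_, ?_⟩ <;> linarith

lemma eq_neg_one_or_zero_or_one_of_coeff_relations {t δ s lam : ℝ}
    (h₃ : 2 * t + s = 1 + lam) (h₂ : δ + t ^ 2 + 2 * t * s = lam)
    (h₁ : δ * (t + s) + t ^ 2 * s = 0) (h₀ : δ * t * s = 0) :
    lam = -1 ∨ lam = 0 ∨ lam = 1 := by
  by_cases ht : t = 0
  · subst ht
    have : (lam + 1) * lam = 0 := by linear_combination h₁ - s * h₂ - lam * h₃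
    rcases mul_eq_zero.1 this with h | h
    · exact .inl (by linarith)
    · exact .inr (.inl h)
  · obtain ⟨rfl, rfl⟩ : δ = 0 ∧ s = 0 := by
      rcases mul_eq_zero.1 h₀ with h | rfl
      · obtain rfl := (mul_eq_zero.1 h).resolve_right ht
        simpa [ht] using h₁
      · simpa [ht] using h₁
    have : (t - 1) ^ 2 = 0 := by linear_combination h₂ - h₃
    obtain rfl : t = 1 := by simpa [sub_eq_zero] using this
    exact .inr (.inr (by linarith))

namespace RH3

-- `inl 0, inl 1` index `e₁, e₂` and `inr 0, inr 1` index the central `e₃, e₄`.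
noncomputable def coords : RH3 ≃ₗ[ℝ] (Fin 2 ⊕ Fin 2 → ℝ) where
  toFun x := Sum.elim ![x.1 0, x.1 1] ![x.1 2, x.2]
  invFun v := (![v (.inl 0), v (.inl 1), v (.inr 0)], v (.inr 1))
  map_add' x y := by ext (i | i) <;> fin_cases i <;> rfl
  map_smul' r x := by ext (i | i) <;> fin_cases i <;> rfl
  left_inv x := Prod.ext (funext fun i => by fin_cases i <;> rfl) rfl
  right_inv v := by ext (i | i) <;> fin_cases i <;> rfl

lemma coords_apply (x : RH3) : coords x = Sum.elim ![x.1 0, x.1 1] ![x.1 2, x.2] := rfl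

noncomputable def basis : Module.Basis (Fin 2 ⊕ Fin 2) ℝ RH3 := .ofEquivFun coords

lemma basis_apply (i : Fin 2 ⊕ Fin 2) : basis i = coords.symm (Pi.single i 1) := by
  simp [basis, Module.Basis.coe_ofEquivFun]

lemma coords_basis (i : Fin 2 ⊕ Fin 2) : coords (basis i) = Pi.single i 1 := by
  rw [basis_apply, LinearEquiv.apply_symm_apply]

lemma lie_eq (x y : RH3) :
    ⁅x, y⁆ = (coords x (.inl 0) * coords y (.inl 1) - coords x (.inl 1) * coords y (.inl 0)) •
      basis (.inr 0) := by
  have hxy : ⁅x, y⁆ = ((![0, 0, x.1 0 * y.1 1 - x.1 1 * y.1 0] : H3), (0 : ℝ)) := rfl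
  apply coords.injective
  rw [map_smul, coords_basis, coords_apply, hxy]
  ext (i | i) <;> fin_cases i <;> simp [coords_apply]

lemma lie_basis_inl_zero_basis_inl_one : ⁅basis (.inl 0), basis (.inl 1)⁆ = basis (.inr 0) := by
  simp [lie_eq, coords_basis]

lemma basis_inr_mem_center (j : Fin 2) : basis (.inr j) ∈ LieAlgebra.center ℝ RH3 := by
  rw [LieModule.mem_maxTrivSubmodule]
  simp [lie_eq, coords_basis]

lemma coords_inl_eq_zero_of_mem_center {z : RH3} (hz : z ∈ LieAlgebra.center ℝ RH3)
    (i : Fin 2) : coords z (.inl i) = 0 := by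
  rw [LieModule.mem_maxTrivSubmodule] at hz
  fin_cases i
  · simpa [lie_eq, coords_basis, basis.ne_zero] using hz (basis (.inl 1))
  · simpa [lie_eq, coords_basis, basis.ne_zero] using hz (basis (.inl 0))

lemma lie_basis_inl_zero_add_lie_basis_inl_one (u v : RH3) :
    ⁅basis (.inl 0), v⁆ + ⁅u, basis (.inl 1)⁆ =
      (coords u (.inl 0) + coords v (.inl 1)) • basis (.inr 0) := by
  simp [lie_eq, coords_basis, ← add_smul, add_comm]

lemma derivation_apply_basis_inr_zero (D : LieDerivation ℝ RH3 RH3) :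
    D (basis (.inr 0)) =
      (coords (D (basis (.inl 0))) (.inl 0) + coords (D (basis (.inl 1))) (.inl 1)) •
        basis (.inr 0) := by
  simpa only [lie_basis_inl_zero_basis_inl_one, lie_basis_inl_zero_add_lie_basis_inl_one] using
    D.apply_lie_eq_add (basis (.inl 0)) (basis (.inl 1))

lemma toMatrix_basis_apply (f : Module.End ℝ RH3) (i j : Fin 2 ⊕ Fin 2) :
    LinearMap.toMatrix basis basis f i j = coords (f (basis j)) i := by
  rw [LinearMap.toMatrix_apply]
  exact Module.Basis.ofEquivFun_repr_apply _ _ _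

lemma toBlocks₁₂_toMatrix_derivation (D : LieDerivation ℝ RH3 RH3) :
    (LinearMap.toMatrix basis basis D.toLinearMap).toBlocks₁₂ = 0 := by
  ext i j
  rw [toBlocks₁₂, of_apply, toMatrix_basis_apply]
  exact coords_inl_eq_zero_of_mem_center (D.apply_mem_center (basis_inr_mem_center j)) i

lemma exists_toBlocks₂₂_toMatrix_derivation (D : LieDerivation ℝ RH3 RH3) :
    ∃ r s : ℝ, (LinearMap.toMatrix basis basis D.toLinearMap).toBlocks₂₂ =
      !![(LinearMap.toMatrix basis basis D.toLinearMap).toBlocks₁₁.trace, r; 0, s] := by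
  refine ⟨LinearMap.toMatrix basis basis D.toLinearMap (.inr 0) (.inr 1),
    LinearMap.toMatrix basis basis D.toLinearMap (.inr 1) (.inr 1), ?_⟩
  ext i j
  fin_cases i <;> fin_cases j <;>
    simp [toBlocks₂₂, toBlocks₁₁, toMatrix_basis_apply, trace_fin_two,
      derivation_apply_basis_inr_zero, coords_basis]

theorem charpoly_derivation_eq (D : LieDerivation ℝ RH3 RH3) :
    ∃ (A : Matrix (Fin 2) (Fin 2) ℝ) (s : ℝ),
      D.toLinearMap.charpoly = A.charpoly * ((X - C A.trace) * (X - C s)) := by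
  set M := LinearMap.toMatrix basis basis D.toLinearMap
  obtain ⟨r, s, h₂₂⟩ := exists_toBlocks₂₂_toMatrix_derivation D
  refine ⟨M.toBlocks₁₁, s, ?_⟩
  calc D.toLinearMap.charpoly = M.charpoly := (LinearMap.charpoly_toMatrix _ basis).symm
    _ = (fromBlocks M.toBlocks₁₁ 0 M.toBlocks₂₁ !![M.toBlocks₁₁.trace, r; 0, s]).charpoly := by
      rw [← toBlocks₁₂_toMatrix_derivation D, ← h₂₂, fromBlocks_toBlocks]
    _ = _ := by rw [charpoly_fromBlocks_zero₁₂, charpoly_upperTriangular_fin_two]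

end RH3

/-- If some derivation of `rh₃ = h₃ × ℝ` has characteristic polynomial
`X² * (X - 1) * (X - λ)`, then `λ ∈ {-1, 0, 1}`. -/
theorem charpoly_derivation_rh3_restrict_lambda (lam : ℝ)
    (h : ∃ D : LieDerivation ℝ RH3 RH3,
      LinearMap.charpoly D.toLinearMap = X ^ 2 * (X - 1) * (X - C lam)) :
    lam = -1 ∨ lam = 0 ∨ lam = 1 := by
  obtain ⟨D, hD⟩ := h
  obtain ⟨A, s, hA⟩ := RH3.charpoly_derivation_eq D
  rw [hA, A.charpoly_fin_two] at hD
  obtain ⟨h₃, h₂, h₁, h₀⟩ := coeff_relations_of_mul_eq hD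
  exact eq_neg_one_or_zero_or_one_of_coeff_relations h₃ h₂ h₁ h₀
end

section
/- Let μ, λ be real numbers with μλ ≠ 0 and such that either (−1 < μ ≤ λ ≤ 1) or (μ = −1 and −1 ≤ λ < 0). If some derivation of the filiform Lie algebra n₄ has characteristic polynomial X(X − 1)(X − μ)(X − λ), then either μ = λ ∈ {−1, 1/2, 1}, or (μ, λ) = (−1/2, 1/2). -/
/-!
A derivation `D` of `n₄` preserves the characteristic ideals `⟨e₄⟩ ⊂ ⟨e₃, e₄⟩ ⊂ ⟨e₂, e₃, e₄⟩`
(the last one is the centralizer of the derived algebra), so its matrix is lower triangular.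
With `a = D(e₁)₁` and `b = D(e₂)₂`, the relations `e₃ = ⁅e₁, e₂⁆` and `e₄ = ⁅e₁, e₃⁆` make the
diagonal `a, b, a + b, 2a + b`. These weights are `0, 1, μ, λ` in some order. Choosing which weight
is `0` and which is `1` is a linear system for `(a, b)`, leaving eight solutions; the other two
weights are then `μ ≤ λ`, and the range conditions exclude the four pairs not in the conclusion.
-/

set_option linter.unusedTactic false
set_option linter.unnecessarySeqFocus false
set_option linter.unreachableTactic false

open Polynomial

/-- The 4-dimensional filiform Lie algebra `n₄`: the real vector space `Fin 4 → ℝ` with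
basis `e₁, e₂, e₃, e₄` and only nonzero brackets `⁅e₁, e₂⁆ = e₃` and `⁅e₁, e₃⁆ = e₄`. -/
def N4 : Type := Fin 4 → ℝ

noncomputable instance : AddCommGroup N4 := Pi.addCommGroup
noncomputable instance : Module ℝ N4 := Pi.module _ _ _
instance : FiniteDimensional ℝ N4 := inferInstanceAs (FiniteDimensional ℝ (Fin 4 → ℝ))

lemma N4.add_apply (x y : N4) (i : Fin 4) : (x + y) i = x i + y i := rfl
lemma N4.smul_apply (r : ℝ) (x : N4) (i : Fin 4) : (r • x) i = r * x i := rfl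

noncomputable instance : LieRing N4 :=
  { (inferInstance : AddCommGroup N4) with
    bracket := fun x y => ![0, 0, x 0 * y 1 - x 1 * y 0, x 0 * y 2 - x 2 * y 0]
    add_lie := by
      intro x y z
      show (![_,_,_,_] : Fin 4 → ℝ) = ![_,_,_,_] + ![_,_,_,_]
      funext i
      fin_cases i <;> simp [N4.add_apply] <;> erw [Pi.add_apply] <;> simp <;> ring
    lie_add := by
      intro x y z
      show (![_,_,_,_] : Fin 4 → ℝ) = ![_,_,_,_] + ![_,_,_,_]
      funext i
      fin_cases i <;> simp [N4.add_apply] <;> erw [Pi.add_apply] <;> simp <;> ring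
    lie_self := by
      intro x
      show (![_,_,_,_] : Fin 4 → ℝ) = 0
      funext i
      fin_cases i <;> simp <;> ring
    leibniz_lie := by
      intro x y z
      show (![_,_,_,_] : Fin 4 → ℝ) = ![_,_,_,_] + ![_,_,_,_]
      funext i
      fin_cases i <;> simp [N4.add_apply] <;> erw [Pi.add_apply] <;> simp <;> ring }

noncomputable instance : LieAlgebra ℝ N4 :=
  { lie_smul := by
      intro r x y
      show (![_,_,_,_] : Fin 4 → ℝ) = r • ![_,_,_,_]
      funext i
      fin_cases i <;> simp [N4.smul_apply] <;> erw [Pi.smul_apply] <;> simp <;> ring }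

lemma Matrix.charpoly_of_isLowerTriangular {R n : Type*} [CommRing R] [Fintype n] [DecidableEq n]
    [LinearOrder n] (M : Matrix n n R) (h : M.IsLowerTriangular) :
    M.charpoly = ∏ i : n, (X - C (M i i)) := by
  have hT : M.transpose.IsUpperTriangular := fun i j hij => h hij
  simp [← M.charpoly_transpose, M.transpose.charpoly_of_isUpperTriangular hT]

namespace N4

lemma lie_apply (x y : N4) :
    ⁅x, y⁆ = ![0, 0, x 0 * y 1 - x 1 * y 0, x 0 * y 2 - x 2 * y 0] := rfl

-- `basis i` is the paper's `e_{i+1}`.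
noncomputable def basis : Module.Basis (Fin 4) ℝ N4 := Pi.basisFun ℝ (Fin 4)

lemma basis_apply (i j : Fin 4) : basis i j = if j = i then 1 else 0 := by
  rw [show basis i = Pi.single i 1 from Pi.basisFun_apply ℝ (Fin 4) i]
  exact Pi.single_apply i 1 j

lemma basis_repr_apply (x : N4) (i : Fin 4) : basis.repr x i = x i :=
  Pi.basisFun_repr ℝ (Fin 4) x i

lemma lie_basis_zero_one : ⁅basis 0, basis 1⁆ = basis 2 := by
  funext j; fin_cases j <;> simp [lie_apply, basis_apply]

lemma lie_basis_zero_two : ⁅basis 0, basis 2⁆ = basis 3 := by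
  funext j; fin_cases j <;> simp [lie_apply, basis_apply]

lemma lie_basis_one_two : ⁅basis 1, basis 2⁆ = 0 := by
  funext j; fin_cases j <;> simp [lie_apply, basis_apply] <;> rfl

section Derivation

variable (D : LieDerivation ℝ N4 N4)

lemma derivation_lie_apply (x y : N4) (i : Fin 4) :
    D ⁅x, y⁆ i = ⁅D x, y⁆ i + ⁅x, D y⁆ i :=
  (congrFun (D.apply_lie_eq_add x y) i).trans (add_comm _ _)

lemma derivation_basis_two_apply_of_le_one (i : Fin 4) (hi : i ≤ 1) : D (basis 2) i = 0 := by
  rw [← lie_basis_zero_one, derivation_lie_apply]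
  fin_cases i <;> simp_all [lie_apply]

lemma derivation_basis_three_apply_of_le_one (i : Fin 4) (hi : i ≤ 1) : D (basis 3) i = 0 := by
  rw [← lie_basis_zero_two, derivation_lie_apply]
  fin_cases i <;> simp_all [lie_apply]

lemma derivation_basis_one_apply_zero : D (basis 1) 0 = 0 := by
  have h : D ⁅basis 1, basis 2⁆ 3 = 0 := by rw [lie_basis_one_two, map_zero]; rfl
  rw [derivation_lie_apply] at h
  simpa [lie_apply, basis_apply, derivation_basis_two_apply_of_le_one D 0 (by decide)] using h

lemma derivation_basis_two_apply_two : D (basis 2) 2 = D (basis 0) 0 + D (basis 1) 1 := by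
  rw [← lie_basis_zero_one, derivation_lie_apply]
  simp [lie_apply, basis_apply, derivation_basis_one_apply_zero]

lemma derivation_basis_three_apply_two : D (basis 3) 2 = 0 := by
  rw [← lie_basis_zero_two, derivation_lie_apply]
  simp [lie_apply, basis_apply, derivation_basis_two_apply_of_le_one D 1 (by decide)]

lemma derivation_basis_three_apply_three :
    D (basis 3) 3 = 2 * D (basis 0) 0 + D (basis 1) 1 := by
  rw [← lie_basis_zero_two, derivation_lie_apply]
  simp [lie_apply, basis_apply, derivation_basis_two_apply_two, two_mul, add_assoc]

lemma toMatrix_derivation_isLowerTriangular :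
    (LinearMap.toMatrix basis basis D.toLinearMap).IsLowerTriangular := by
  intro i j (hij : i < j)
  rw [LinearMap.toMatrix_apply, basis_repr_apply, LieDerivation.coeFn_coe]
  fin_cases i <;> fin_cases j <;> first
    | exact absurd hij (by decide)
    | simp [derivation_basis_one_apply_zero, derivation_basis_two_apply_of_le_one,
        derivation_basis_three_apply_of_le_one, derivation_basis_three_apply_two]

lemma charpoly_derivation : D.toLinearMap.charpoly =
    (X - C (D (basis 0) 0)) * (X - C (D (basis 1) 1)) * (X - C (D (basis 0) 0 + D (basis 1) 1)) *
      (X - C (2 * D (basis 0) 0 + D (basis 1) 1)) := by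
  rw [← LinearMap.charpoly_toMatrix D.toLinearMap basis,
    Matrix.charpoly_of_isLowerTriangular _ (toMatrix_derivation_isLowerTriangular D),
    Fin.prod_univ_four]
  simp only [LinearMap.toMatrix_apply, basis_repr_apply, LieDerivation.coeFn_coe,
    derivation_basis_two_apply_two, derivation_basis_three_apply_three]

end Derivation

end N4

lemma eq_and_eq_of_forall_mul_sub_mul_sub_eq {r s μ lam : ℝ} (hrs : r ≤ s) (hμ : μ ≤ lam)
    (h : ∀ x : ℝ, x * (x - 1) * (x - r) * (x - s) = x * (x - 1) * (x - μ) * (x - lam)) :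
    μ = r ∧ lam = s := by
  have hsum : μ + lam = r + s := by linear_combination h 3 / 6 - h 2 / 2
  have hprod : μ * lam = r * s := by linear_combination -h 2 / 2 + 2 * hsum
  have hgap : lam - μ = s - r := by
    refine (pow_left_inj₀ (sub_nonneg.2 hμ) (sub_nonneg.2 hrs) two_ne_zero).1 ?_
    linear_combination (μ + lam + r + s) * hsum - 4 * hprod
  constructor <;> linarith

lemma weights_eq_of_zero_mem_of_one_mem {a b : ℝ} (h0 : a * b * (a + b) * (2 * a + b) = 0)
    (h1 : (1 - a) * (1 - b) * (1 - (a + b)) * (1 - (2 * a + b)) = 0) :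
    a = 0 ∧ b = 1 ∨ a = 1 ∧ b = 0 ∨ a = 1 / 2 ∧ b = 0 ∨ a = 1 ∧ b = -1 ∨ a = -1 ∧ b = 1 ∨
      a = 1 ∧ b = -2 ∨ a = -1 / 2 ∧ b = 1 ∨ a = -1 ∧ b = 2 := by
  simp only [mul_eq_zero, sub_eq_zero] at h0 h1
  rcases h0 with ((h0 | h0) | h0) | h0 <;> rcases h1 with ((h1 | h1) | h1) | h1
  all_goals repeat' first
    | exact ⟨by linarith, by linarith⟩
    | exact Or.inl ⟨by linarith, by linarith⟩
    | refine Or.inr ?_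

lemma eq_of_weights_charpoly_eq {a b μ lam : ℝ} (hμ : μ ≤ lam)
    (h : (X - C a) * (X - C b) * (X - C (a + b)) * (X - C (2 * a + b)) =
      X * (X - 1) * (X - C μ) * (X - C lam)) :
    μ = 1 ∧ lam = 1 ∨ μ = 1 ∧ lam = 2 ∨ μ = 1 / 2 ∧ lam = 1 / 2 ∨ μ = -1 ∧ lam = 1 ∨
      μ = -1 ∧ lam = -1 ∨ μ = -2 ∧ lam = -1 ∨ μ = -1 / 2 ∧ lam = 1 / 2 ∨ μ = -1 ∧ lam = 2 := by
  have hev (x : ℝ) : (x - a) * (x - b) * (x - (a + b)) * (x - (2 * a + b)) =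
      x * (x - 1) * (x - μ) * (x - lam) := by
    simpa using congrArg (eval x) h
  have h0 : a * b * (a + b) * (2 * a + b) = 0 := by linear_combination hev 0
  have h1 : (1 - a) * (1 - b) * (1 - (a + b)) * (1 - (2 * a + b)) = 0 := by
    linear_combination hev 1
  rcases weights_eq_of_zero_mem_of_one_mem h0 h1 with
    ⟨rfl, rfl⟩ | ⟨rfl, rfl⟩ | ⟨rfl, rfl⟩ | ⟨rfl, rfl⟩ | ⟨rfl, rfl⟩ | ⟨rfl, rfl⟩ | ⟨rfl, rfl⟩ |
      ⟨rfl, rfl⟩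
  all_goals repeat' first
    | exact eq_and_eq_of_forall_mul_sub_mul_sub_eq (by norm_num) hμ fun x => by
        linear_combination hev x
    | refine Or.inl (eq_and_eq_of_forall_mul_sub_mul_sub_eq (by norm_num) hμ fun x => ?_)
      linear_combination hev x
    | refine Or.inr ?_

theorem charpoly_derivation_n4_r4_mu_lambda_general (μ lam : ℝ)
    (hrange : (-1 < μ ∧ μ ≤ lam ∧ lam ≤ 1) ∨ (μ = -1 ∧ -1 ≤ lam ∧ lam < 0))
    (h : ∃ D : LieDerivation ℝ N4 N4,
      LinearMap.charpoly D.toLinearMap = X * (X - 1) * (X - C μ) * (X - C lam)) :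
    (μ = lam ∧ (lam = -1 ∨ lam = 1 / 2 ∨ lam = 1)) ∨ (μ = -(1 / 2) ∧ lam = 1 / 2) := by
  obtain ⟨D, hD⟩ := h
  have hle : μ ≤ lam := by rcases hrange with ⟨-, h, -⟩ | ⟨rfl, h, -⟩ <;> linarith
  rcases eq_of_weights_charpoly_eq hle ((N4.charpoly_derivation D).symm.trans hD) with
    ⟨rfl, rfl⟩ | ⟨rfl, rfl⟩ | ⟨rfl, rfl⟩ | ⟨rfl, rfl⟩ | ⟨rfl, rfl⟩ | ⟨rfl, rfl⟩ | ⟨rfl, rfl⟩ |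
      ⟨rfl, rfl⟩ <;> revert hrange <;> norm_num

/-- For `μλ ≠ 0` with either `-1 < μ ≤ λ ≤ 1` or `μ = -1 ∧ -1 ≤ λ < 0`: if some derivation
of the filiform Lie algebra `n₄` has characteristic polynomial
`X * (X - 1) * (X - μ) * (X - λ)`, then either `μ = λ ∈ {-1, 1/2, 1}` or `(μ, λ) = (-1/2, 1/2)`. -/
theorem charpoly_derivation_n4_r4_mu_lambda (μ lam : ℝ) (hne : μ * lam ≠ 0)
    (hrange : (-1 < μ ∧ μ ≤ lam ∧ lam ≤ 1) ∨ (μ = -1 ∧ -1 ≤ lam ∧ lam < 0))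
    (h : ∃ D : LieDerivation ℝ N4 N4,
      LinearMap.charpoly D.toLinearMap = X * (X - 1) * (X - C μ) * (X - C lam)) :
    (μ = lam ∧ (lam = -1 ∨ lam = 1 / 2 ∨ lam = 1)) ∨ (μ = -(1 / 2) ∧ lam = 1 / 2) :=
  charpoly_derivation_n4_r4_mu_lambda_general μ lam hrange h
end
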